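/- If N is a well-formed free-choice net and Q is a nonempty set of P-components of N, then the Q-projection N↾(∪Q) is a well-formed free-choice net. -/
import Mathlib


open scoped Classical

/-- A Petri net over places `P` and transitions `T`, given by the pre-set and
post-set of each transition (encoding the flow relation `F`). -/
structure PetriNet (P T : Type) where
  pre : T → Set P
  post : T → Set P

namespace PetriNet

variable {P T : Type}

/-- Transition `t` is enabled at marking `M`. -/
def enabled (N : PetriNet P T) (M : P → ℕ) (t : T) : Prop :=
  ∀ p ∈ N.pre t, 1 ≤ M p

/-- The marking obtained by firing `t` at `M`. -/
noncomputable def fire (N : PetriNet P T) (M : P → ℕ) (t : T) : P → ℕ :=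
  fun p => M p - (if p ∈ N.pre t then 1 else 0) + (if p ∈ N.post t then 1 else 0)

/-- `Fires N M σ M'`: the firing sequence `σ` is executable at `M` and leads to `M'`. -/
inductive Fires (N : PetriNet P T) : (P → ℕ) → List T → (P → ℕ) → Prop
  | nil (M : P → ℕ) : Fires N M [] M
  | cons {M M'' : P → ℕ} {t : T} {σ : List T} :
      N.enabled M t → Fires N (N.fire M t) σ M'' → Fires N M (t :: σ) M''

/-- `M'` is reachable from `M` in `N`. -/
def Reach (N : PetriNet P T) (M M' : P → ℕ) : Prop := ∃ σ, Fires N M σ M'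

/-- The set of transitions enabled at `M`. -/
def enabledSet (N : PetriNet P T) (M : P → ℕ) : Set T := {t | N.enabled M t}

/-- `(N,M)` is lucent: distinct reachable markings enable distinct transition sets. -/
def Lucent (N : PetriNet P T) (M : P → ℕ) : Prop :=
  ∀ M1 M2, Reach N M M1 → Reach N M M2 →
    enabledSet N M1 = enabledSet N M2 → M1 = M2

/-- `(N,M)` is bounded. -/
def Bounded (N : PetriNet P T) (M : P → ℕ) : Prop :=
  ∃ k, ∀ M', Reach N M M' → ∀ p, M' p ≤ k

/-- `(N,M)` is live. -/
def Live (N : PetriNet P T) (M : P → ℕ) : Prop :=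
  ∀ M', Reach N M M' → ∀ t, ∃ M'', Reach N M' M'' ∧ N.enabled M'' t

/-- `MH` is a home marking of `(N,M)`. -/
def HomeMarking (N : PetriNet P T) (M MH : P → ℕ) : Prop :=
  ∀ M', Reach N M M' → Reach N M' MH

/-- A net is well-formed if some marking makes it live and bounded. -/
def WellFormed (N : PetriNet P T) : Prop := ∃ M, Live N M ∧ Bounded N M

/-- `N` is a free-choice net. -/
def FreeChoice (N : PetriNet P T) : Prop :=
  ∀ t1 t2 : T, N.pre t1 = N.pre t2 ∨ N.pre t1 ∩ N.pre t2 = ∅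

/-- A set of nodes is cluster-closed: with a place it contains all its output
transitions, and with a transition all its input places. -/
def ClusterClosed (N : PetriNet P T) (X : Set (P ⊕ T)) : Prop :=
  (∀ p, Sum.inl p ∈ X → ∀ t, p ∈ N.pre t → Sum.inr t ∈ X) ∧
  (∀ t, Sum.inr t ∈ X → ∀ p, p ∈ N.pre t → Sum.inl p ∈ X)

/-- The cluster of a node `x`: the smallest cluster-closed set containing `x`. -/
def cluster (N : PetriNet P T) (x : P ⊕ T) : Set (P ⊕ T) :=
  ⋂₀ {X | x ∈ X ∧ ClusterClosed N X}

/-- The set of clusters of `N`. -/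
def clusters (N : PetriNet P T) : Set (Set (P ⊕ T)) :=
  {C | ∃ x, C = cluster N x}

/-- `C` is a cluster of `N`. -/
def IsCluster (N : PetriNet P T) (C : Set (P ⊕ T)) : Prop := ∃ x, C = cluster N x

/-- The transitions of a set of nodes. -/
def transOf (C : Set (P ⊕ T)) : Set T := {t | Sum.inr t ∈ C}

/-- `M(C)`: one token on each place of `C`. -/
noncomputable def clusterMarking (C : Set (P ⊕ T)) : P → ℕ :=
  fun p => if Sum.inl p ∈ C then 1 else 0

/-- `C` is a home cluster of `(N,M)`. -/
def HomeCluster (N : PetriNet P T) (M : P → ℕ) (C : Set (P ⊕ T)) : Prop :=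
  IsCluster N C ∧ HomeMarking N M (clusterMarking C)

/-- `(N,M)` is perpetual: live, bounded, with a home cluster. -/
def Perpetual (N : PetriNet P T) (M : P → ℕ) : Prop :=
  Live N M ∧ Bounded N M ∧ ∃ C, HomeCluster N M C

/-- `•R`: transitions with an output place in `R`. -/
def preT (N : PetriNet P T) (R : Set P) : Set T := {t | ∃ p ∈ R, p ∈ N.post t}

/-- `R•`: transitions with an input place in `R`. -/
def postT (N : PetriNet P T) (R : Set P) : Set T := {t | ∃ p ∈ R, p ∈ N.pre t}

/-- `R` is a siphon. -/
def Siphon (N : PetriNet P T) (R : Set P) : Prop := preT N R ⊆ postT N R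

/-- `R` is a trap. -/
def Trap (N : PetriNet P T) (R : Set P) : Prop := postT N R ⊆ preT N R

/-- The arcs of `N` restricted to the node set `X`. -/
def subnetEdge (N : PetriNet P T) (X : Set (P ⊕ T)) : (P ⊕ T) → (P ⊕ T) → Prop :=
  fun a b => a ∈ X ∧ b ∈ X ∧
    ((∃ p t, a = Sum.inl p ∧ b = Sum.inr t ∧ p ∈ N.pre t) ∨
     (∃ t p, a = Sum.inr t ∧ b = Sum.inl p ∧ p ∈ N.post t))

/-- `X` is (the node set of) a P-component of `N`: closed under neighbors of its
places, every transition has exactly one input and one output place inside it,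
and its subnet is strongly connected. -/
def PComponent (N : PetriNet P T) (X : Set (P ⊕ T)) : Prop :=
  X.Nonempty ∧
  (∀ p, Sum.inl p ∈ X → ∀ t, (p ∈ N.pre t ∨ p ∈ N.post t) → Sum.inr t ∈ X) ∧
  (∀ t, Sum.inr t ∈ X →
    (∃! p, p ∈ N.pre t ∧ Sum.inl p ∈ X) ∧ (∃! p, p ∈ N.post t ∧ Sum.inl p ∈ X)) ∧
  (∀ a ∈ X, ∀ b ∈ X, Relation.ReflTransGen (subnetEdge N X) a b)

/-- `N` has a P-cover. -/
def PCover (N : PetriNet P T) : Prop :=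
  ∀ x : P ⊕ T, ∃ X, PComponent N X ∧ x ∈ X

/-- Total number of tokens of `M` on the places of `X`. -/
noncomputable def tokenCount [Fintype P] (X : Set (P ⊕ T)) (M : P → ℕ) : ℕ :=
  ∑ p : P, if Sum.inl p ∈ X then M p else 0

/-- `(N,M)` is locally safe: every P-component carries at most one token in
every reachable marking. -/
def LocallySafe [Fintype P] (N : PetriNet P T) (M : P → ℕ) : Prop :=
  ∀ X, PComponent N X → ∀ M', Reach N M M' → tokenCount X M' ≤ 1

/-- The subnet of `N` generated by the node set `U`. -/
def restrict (N : PetriNet P T) (U : Set (P ⊕ T)) :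
    PetriNet {p // Sum.inl p ∈ U} {t // Sum.inr t ∈ U} where
  pre t := {p | p.1 ∈ N.pre t.1}
  post t := {p | p.1 ∈ N.post t.1}

/-- Inclusion of the nodes of the subnet generated by `U` into the nodes of `N`. -/
def mapNode (U : Set (P ⊕ T)) :
    ({p // Sum.inl p ∈ U} ⊕ {t // Sum.inr t ∈ U}) → (P ⊕ T)
  | .inl p => .inl p.1
  | .inr t => .inr t.1

/-- The flow relation of `N` as an edge relation on nodes. -/
def flowEdge (N : PetriNet P T) : (P ⊕ T) → (P ⊕ T) → Prop
  | .inl p, .inr t => p ∈ N.pre t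
  | .inr t, .inl p => p ∈ N.post t
  | _, _ => False

/-- `N` is a workflow net with source `i` and sink `o`. -/
def IsWorkflowNet (N : PetriNet P T) (i o : P) : Prop :=
  (∀ t, i ∉ N.post t) ∧ (∀ t, o ∉ N.pre t) ∧
  (∀ x : P ⊕ T, Relation.ReflTransGen (flowEdge N) (Sum.inl i) x ∧
    Relation.ReflTransGen (flowEdge N) x (Sum.inl o))

/-- The short-circuited net: a fresh transition `t*` from `o` to `i`. -/
def shortCircuit (N : PetriNet P T) (i o : P) : PetriNet P (T ⊕ Unit) where
  pre t := match t with | .inl t => N.pre t | .inr _ => {o}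
  post t := match t with | .inl t => N.post t | .inr _ => {i}

/-- The marking `[p]` with a single token on `p`. -/
noncomputable def unitMarking (p : P) : P → ℕ := fun q => if q = p then 1 else 0

/-- A workflow net is sound iff its short-circuited net marked with `[i]`
is live and bounded. -/
def Sound (N : PetriNet P T) (i o : P) : Prop :=
  Live (shortCircuit N i o) (unitMarking i) ∧ Bounded (shortCircuit N i o) (unitMarking i)

/-- `AltPath N p0 [(t1,p1),...,(tn,pn)]` encodes the path `⟨p0,t1,p1,...,tn,pn⟩`
in `N`, alternating between places and transitions along the flow relation. -/
inductive AltPath (N : PetriNet P T) : P → List (T × P) → Prop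
  | nil (p : P) : AltPath N p []
  | cons {p q : P} {t : T} {l : List (T × P)} :
      p ∈ N.pre t → q ∈ N.post t → AltPath N q l → AltPath N p ((t, q) :: l)

end PetriNet

namespace PetriNet

variable {P T : Type}

/-! ### Basic reachability facts -/

theorem Fires.append' {N : PetriNet P T} :
    ∀ {M M' M'' : P → ℕ} {σ σ' : List T},
      Fires N M σ M' → Fires N M' σ' M'' → Fires N M (σ ++ σ') M'' := by
  intro M M' M'' σ σ' h1 h2
  induction h1 with
  | nil M => simpa using h2
  | cons he _ ih => exact Fires.cons he (ih h2)

/-- Reachability restricted to an "allowed" set of transitions. -/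
def AReach (N : PetriNet P T) (A : T → Prop) (M M' : P → ℕ) : Prop :=
  ∃ σ, Fires N M σ M' ∧ ∀ t ∈ σ, A t

theorem AReach.refl (N : PetriNet P T) (A : T → Prop) (M : P → ℕ) : AReach N A M M :=
  ⟨[], Fires.nil M, by simp⟩

theorem AReach.trans {N : PetriNet P T} {A : T → Prop} {M1 M2 M3 : P → ℕ}
    (h1 : AReach N A M1 M2) (h2 : AReach N A M2 M3) : AReach N A M1 M3 := by
  obtain ⟨σ1, hf1, ha1⟩ := h1
  obtain ⟨σ2, hf2, ha2⟩ := h2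
  exact ⟨σ1 ++ σ2, hf1.append' hf2, by
    intro t ht; rcases List.mem_append.1 ht with h | h
    exacts [ha1 t h, ha2 t h]⟩

theorem AReach.single {N : PetriNet P T} {A : T → Prop} {M : P → ℕ} {t : T}
    (he : N.enabled M t) (hA : A t) : AReach N A M (N.fire M t) :=
  ⟨[t], Fires.cons he (Fires.nil _), by simpa using hA⟩

theorem AReach.reach {N : PetriNet P T} {A : T → Prop} {M M' : P → ℕ}
    (h : AReach N A M M') : Reach N M M' := ⟨h.choose, h.choose_spec.1⟩

theorem reach_iff_aReach_true {N : PetriNet P T} {M M' : P → ℕ} :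
    Reach N M M' ↔ AReach N (fun _ => True) M M' := by
  constructor
  · rintro ⟨σ, h⟩; exact ⟨σ, h, by simp⟩
  · exact AReach.reach

theorem Reach.refl' (N : PetriNet P T) (M : P → ℕ) : Reach N M M := ⟨[], Fires.nil M⟩

theorem Reach.trans' {N : PetriNet P T} {M1 M2 M3 : P → ℕ}
    (h1 : Reach N M1 M2) (h2 : Reach N M2 M3) : Reach N M1 M3 := by
  obtain ⟨σ1, hf1⟩ := h1; obtain ⟨σ2, hf2⟩ := h2
  exact ⟨σ1 ++ σ2, hf1.append' hf2⟩

theorem fire_apply (N : PetriNet P T) (M : P → ℕ) (t : T) (p : P) :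
    N.fire M t p = M p - (if p ∈ N.pre t then 1 else 0) + (if p ∈ N.post t then 1 else 0) := rfl

/-- A transition is `A`-dead at `M` if it is enabled at no `A`-reachable marking. -/
def ADead (N : PetriNet P T) (A : T → Prop) (t : T) (M : P → ℕ) : Prop :=
  ∀ M', AReach N A M M' → ¬ N.enabled M' t

theorem ADead.mono {N : PetriNet P T} {A : T → Prop} {t : T} {M M' : P → ℕ}
    (h : AReach N A M M') (hd : ADead N A t M) : ADead N A t M' :=
  fun M'' h'' => hd M'' (h.trans h'')

/-- Places that stay empty at every `A`-reachable marking. -/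
def Zset (N : PetriNet P T) (A : T → Prop) (M : P → ℕ) : Set P :=
  {p | ∀ M', AReach N A M M' → M' p = 0}

theorem Zset.mono {N : PetriNet P T} {A : T → Prop} {M M' : P → ℕ}
    (h : AReach N A M M') : Zset N A M ⊆ Zset N A M' :=
  fun _p hp _M'' h'' => hp _ (h.trans h'')

theorem freeChoice_pre_eq {N : PetriNet P T} (hfc : FreeChoice N) {t w : T} {q : P}
    (hqt : q ∈ N.pre t) (hqw : q ∈ N.pre w) : N.pre t = N.pre w := by
  rcases hfc t w with h | h
  · exact h
  · exact absurd (Set.mem_inter hqt hqw) (by simp [h])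

/-- Along allowed runs, the input places of an `A`-dead transition never lose tokens. -/
theorem pre_nondecreasing {N : PetriNet P T} (hfc : FreeChoice N) {A : T → Prop}
    {t : T} {M2 : P → ℕ} (hdead : ADead N A t M2) {q : P} (hq : q ∈ N.pre t) :
    ∀ {σ : List T} {M3 M4 : P → ℕ}, Fires N M3 σ M4 → (∀ s ∈ σ, A s) →
      AReach N A M2 M3 → M3 q ≤ M4 q := by
  intro σ M3 M4 hf
  induction hf with
  | nil M => intro _ _; exact le_rfl
  | @cons M M'' w σ' he hrest ih =>
    intro hall h23
    have hw : A w := hall w (by simp)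
    have hqw : q ∉ N.pre w := by
      intro hqw
      have hpp := freeChoice_pre_eq hfc hqw hq
      exact hdead M h23 (fun p hp => he p (by rw [hpp]; exact hp))
    have h1 : M q ≤ N.fire M w q := by
      rw [fire_apply, if_neg hqw]; omega
    have h2 : N.fire M w q ≤ M'' q :=
      ih (fun s hs => hall s (by simp [hs])) (h23.trans (AReach.single he hw))
    omega

/-- Key lemma: some allowed-reachable marking `M2` has the property that every
transition `A`-dead at `M2` has an input place permanently empty from `M2`. -/
theorem exists_good_marking [Fintype P] {N : PetriNet P T} (hfc : FreeChoice N)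
    (A : T → Prop) (M1 : P → ℕ) :
    ∃ M2, AReach N A M1 M2 ∧
      ∀ t, ADead N A t M2 → ∃ p, p ∈ N.pre t ∧ p ∈ Zset N A M2 := by
  -- first find a marking with stable (maximal) Zset
  have main : ∀ (k : ℕ) (M : P → ℕ), Fintype.card P ≤ (Zset N A M).toFinset.card + k →
      ∃ M2, AReach N A M M2 ∧ ∀ M3, AReach N A M2 M3 → Zset N A M3 = Zset N A M2 := by
    intro k
    induction k with
    | zero =>
      intro M hM
      refine ⟨M, AReach.refl N A M, fun M3 h3 => ?_⟩
      have hsub := Zset.mono h3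
      have h1 : (Zset N A M).toFinset = Finset.univ := by
        apply Finset.eq_univ_of_card
        have := Finset.card_le_univ (Zset N A M).toFinset
        omega
      have h2 : Zset N A M = Set.univ := by
        rw [← Set.coe_toFinset (Zset N A M), h1]; simp
      apply Set.Subset.antisymm _ hsub
      rw [h2]; exact Set.subset_univ _
    | succ k ih =>
      intro M hM
      by_cases hstable : ∀ M3, AReach N A M M3 → Zset N A M3 = Zset N A M
      · exact ⟨M, AReach.refl N A M, hstable⟩
      · push_neg at hstable
        obtain ⟨M3, h3, hne⟩ := hstable
        have hss : Zset N A M ⊂ Zset N A M3 := (Zset.mono h3).ssubset_of_ne (Ne.symm hne)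
        have hcard : (Zset N A M).toFinset.card < (Zset N A M3).toFinset.card := by
          apply Finset.card_lt_card
          rw [Set.toFinset_ssubset_toFinset]; exact hss
        obtain ⟨M2, h2, hst⟩ := ih M3 (by omega)
        exact ⟨M2, h3.trans h2, hst⟩
  obtain ⟨M2, h12, hstable⟩ := main (Fintype.card P) M1 (by omega)
  refine ⟨M2, h12, fun t hdead => ?_⟩
  by_contra hno
  push_neg at hno
  -- every input place of t can be marked; mark them one by one
  have seq : ∀ s : Finset P, ↑s ⊆ N.pre t →
      ∃ M3, AReach N A M2 M3 ∧ ∀ p ∈ s, 1 ≤ M3 p := by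
    intro s
    induction s using Finset.induction_on with
    | empty => intro _; exact ⟨M2, AReach.refl N A M2, by simp⟩
    | @insert p s hps ih =>
      intro hsub
      have hp : p ∈ N.pre t := hsub (by simp)
      obtain ⟨M3, h23, hmarked⟩ := ih (fun x hx => hsub (by simp [hx]))
      have hpZ : p ∉ Zset N A M3 := by
        rw [hstable M3 h23]; exact hno p hp
      simp only [Zset, Set.mem_setOf_eq, not_forall] at hpZ
      obtain ⟨M4, h34, hp4⟩ := hpZ
      refine ⟨M4, h23.trans h34, fun x hx => ?_⟩
      rcases Finset.mem_insert.1 hx with rfl | hx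
      · omega
      · have hxpre : x ∈ N.pre t := hsub (by simp [hx])
        obtain ⟨σ, hf, hall⟩ := h34
        have := pre_nondecreasing hfc (hdead.mono h23) hxpre hf hall (AReach.refl N A M3)
        exact le_trans (hmarked x hx) this
  obtain ⟨M3, h23, hmk⟩ := seq (N.pre t).toFinset (by simp)
  exact hdead M3 h23 (fun p hp => hmk p (Set.mem_toFinset.2 hp))

/-! ### Siphon and trap invariants -/

theorem trap_marked_invariant {N : PetriNet P T} {S : Set P} (hS : Trap N S) :
    ∀ {σ : List T} {M M' : P → ℕ}, Fires N M σ M' → (∃ p ∈ S, 1 ≤ M p) →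
      ∃ p ∈ S, 1 ≤ M' p := by
  intro σ M M' hf
  induction hf with
  | nil M => exact id
  | @cons M M'' t σ' he _ ih =>
    intro ⟨p, hpS, hpM⟩
    apply ih
    by_cases hp : p ∈ N.pre t
    · have : t ∈ postT N S := ⟨p, hpS, hp⟩
      obtain ⟨q, hqS, hq⟩ := hS this
      exact ⟨q, hqS, by rw [fire_apply, if_pos hq]; omega⟩
    · exact ⟨p, hpS, by rw [fire_apply, if_neg hp]; omega⟩

theorem siphon_unmarked_invariant {N : PetriNet P T} {R : Set P} (hR : Siphon N R) :
    ∀ {σ : List T} {M M' : P → ℕ}, Fires N M σ M' → (∀ p ∈ R, M p = 0) →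
      ∀ p ∈ R, M' p = 0 := by
  intro σ M M' hf
  induction hf with
  | nil M => exact id
  | @cons M M'' t σ' he _ ih =>
    intro hzero
    apply ih
    intro p hp
    have hpost : p ∉ N.post t := by
      intro hpost
      obtain ⟨q, hqR, hq⟩ := hR ⟨p, hp, hpost⟩
      have := he q hq
      have := hzero q hqR
      omega
    rw [fire_apply, if_neg hpost]
    have := hzero p hp
    omega

/-! ### Commoner: sufficiency -/

theorem not_aDead {N : PetriNet P T} {A : T → Prop} {t : T} {M : P → ℕ}
    (h : ¬ ADead N A t M) : ∃ M', AReach N A M M' ∧ N.enabled M' t := by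
  by_contra hco
  push_neg at hco
  exact h (fun M' h' he => hco M' h' he)

theorem live_of_siphon_trap [Fintype P] {N : PetriNet P T} (hfc : FreeChoice N) (M0 : P → ℕ)
    (H : ∀ R : Set P, Siphon N R → R.Nonempty →
      ∃ S, S ⊆ R ∧ Trap N S ∧ ∃ p ∈ S, 1 ≤ M0 p) :
    Live N M0 := by
  intro M hM t
  by_contra hcon
  push_neg at hcon
  have hdead : ADead N (fun _ => True) t M := fun M' h' he => (hcon M' (AReach.reach h')) he
  obtain ⟨M2, h12, hkey⟩ := exists_good_marking hfc (fun _ => True) M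
  have hdead2 : ADead N (fun _ => True) t M2 := hdead.mono h12
  obtain ⟨p, hppre, hpZ⟩ := hkey t hdead2
  have hZsiphon : Siphon N (Zset N (fun _ => True) M2) := by
    rintro u ⟨z, hzZ, hzpost⟩
    by_cases hd : ADead N (fun _ => True) u M2
    · obtain ⟨p', hp', hp'Z⟩ := hkey u hd
      exact ⟨p', hp'Z, hp'⟩
    · exfalso
      obtain ⟨M3, h23, hen⟩ := not_aDead hd
      have h4 : AReach N (fun _ => True) M2 (N.fire M3 u) :=
        h23.trans (AReach.single hen trivial)
      have hz := hzZ _ h4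
      rw [fire_apply, if_pos hzpost] at hz
      omega
  obtain ⟨S, hSZ, hStrap, q, hqS, hqM0⟩ := H _ hZsiphon ⟨p, hpZ⟩
  have hreach02 : Reach N M0 M2 := hM.trans' (AReach.reach h12)
  obtain ⟨σ, hσ⟩ := hreach02
  obtain ⟨q2, hq2S, hq2⟩ := trap_marked_invariant hStrap hσ ⟨q, hqS, hqM0⟩
  have hq20 : M2 q2 = 0 := (hSZ hq2S) M2 (AReach.refl _ _ _)
  omega

/-! ### Peeling a siphon with no nonempty trap inside -/

theorem peel [Fintype P] {N : PetriNet P T} {R : Set P}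
    (hNT : ∀ S : Set P, S ⊆ R → Trap N S → ¬S.Nonempty) :
    ∃ ρ : P → ℕ, Set.InjOn ρ R ∧
      ∀ p ∈ R, ∃ t, p ∈ N.pre t ∧ ∀ q ∈ N.post t, q ∈ R → ρ q < ρ p := by
  suffices h : ∀ s : Finset P, ↑s ⊆ R → ∃ ρ : P → ℕ, Set.InjOn ρ ↑s ∧
      ∀ p ∈ s, ∃ t, p ∈ N.pre t ∧ ∀ q ∈ N.post t, q ∈ s → ρ q < ρ p by
    obtain ⟨ρ, hinj, hp⟩ := h R.toFinset (by simp)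
    refine ⟨ρ, by simpa using hinj, fun p hpR => ?_⟩
    obtain ⟨t, h1, h2⟩ := hp p (Set.mem_toFinset.2 hpR)
    exact ⟨t, h1, fun q hq hqR => h2 q hq (Set.mem_toFinset.2 hqR)⟩
  intro s
  induction s using Finset.strongInduction with
  | _ s ih =>
    intro hsub
    rcases s.eq_empty_or_nonempty with rfl | hsne
    · exact ⟨fun _ => 0, by simp, by simp⟩
    · have hnotrap : ¬ Trap N ↑s := by
        intro h
        exact hNT ↑s hsub h (by exact_mod_cast hsne)
      have hexit : ∃ t1, (∃ p ∈ (↑s : Set P), p ∈ N.pre t1) ∧ ∀ q ∈ N.post t1, q ∉ s := by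
        by_contra hco
        push_neg at hco
        apply hnotrap
        rintro u ⟨p1, hp1, hp1'⟩
        obtain ⟨q, hq, hq'⟩ := hco u ⟨p1, hp1, hp1'⟩
        exact ⟨q, by exact_mod_cast hq', hq⟩
      obtain ⟨t1, ⟨p1, hp1s, hp1pre⟩, hnopost⟩ := hexit
      have hp1s' : p1 ∈ s := by exact_mod_cast hp1s
      obtain ⟨ρ', hinj', hp'⟩ := ih (s.erase p1) (Finset.erase_ssubset hp1s')
        (fun x hx => hsub (by
          simp only [Finset.coe_erase, Set.mem_diff] at hx
          exact hx.1))
      refine ⟨fun x => if x = p1 then 0 else ρ' x + 1, ?_, ?_⟩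
      · intro x hx y hy hxy
        by_cases hx1 : x = p1 <;> by_cases hy1 : y = p1
        · exact hx1.trans hy1.symm
        · simp [hx1, hy1] at hxy
        · simp [hx1, hy1] at hxy
        · simp only [if_neg hx1, if_neg hy1] at hxy
          have hx' : x ∈ (↑(s.erase p1) : Set P) := by
            simp only [Finset.coe_erase, Set.mem_diff]
            exact ⟨hx, by simpa using hx1⟩
          have hy' : y ∈ (↑(s.erase p1) : Set P) := by
            simp only [Finset.coe_erase, Set.mem_diff]
            exact ⟨hy, by simpa using hy1⟩
          exact hinj' hx' hy' (by omega)
      · intro p hp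
        by_cases hpp : p = p1
        · subst hpp
          exact ⟨t1, hp1pre, fun q hq hqs => absurd hqs (hnopost q hq)⟩
        · obtain ⟨t, hpre, hcond⟩ := hp' p (Finset.mem_erase.2 ⟨hpp, hp⟩)
          refine ⟨t, hpre, fun q hq hqs => ?_⟩
          by_cases hq1 : q = p1
          · simp only [if_pos hq1, if_neg hpp]
            omega
          · have := hcond q hq (Finset.mem_erase.2 ⟨hq1, hqs⟩)
            simp only [if_neg hq1, if_neg hpp]
            omega

/-! ### The weighted token sum -/

noncomputable def muW [Fintype P] (R : Set P) (ρ : P → ℕ) (M : P → ℕ) : ℕ :=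
  ∑ p ∈ R.toFinset, M p * 2 ^ ρ p

theorem sum_two_pow (n : ℕ) : ∑ i ∈ Finset.range n, 2 ^ i = 2 ^ n - 1 := by
  induction n with
  | zero => simp
  | succ n ih =>
    rw [Finset.sum_range_succ, ih]
    have : 0 < 2 ^ n := pow_pos (by norm_num) n
    omega

theorem muW_fire [Fintype P] {N : PetriNet P T} {R : Set P} (hR : Siphon N R)
    {ρ : P → ℕ} (hinj : Set.InjOn ρ R) {t : T} {M : P → ℕ} (he : N.enabled M t)
    (hA : (∀ p ∈ N.pre t, p ∉ R) ∨
      ∃ p, p ∈ N.pre t ∧ p ∈ R ∧ ∀ q ∈ N.post t, q ∈ R → ρ q < ρ p) :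
    muW R ρ (N.fire M t) ≤ muW R ρ M ∧
      ((∃ p ∈ N.pre t, p ∈ R) → muW R ρ (N.fire M t) < muW R ρ M) := by
  have key : muW R ρ (N.fire M t) + ∑ p ∈ R.toFinset, (if p ∈ N.pre t then 1 else 0) * 2 ^ ρ p
      = muW R ρ M + ∑ p ∈ R.toFinset, (if p ∈ N.post t then 1 else 0) * 2 ^ ρ p := by
    unfold muW
    rw [← Finset.sum_add_distrib, ← Finset.sum_add_distrib]
    apply Finset.sum_congr rfl
    intro p _
    have hfire : N.fire M t p + (if p ∈ N.pre t then 1 else 0)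
        = M p + (if p ∈ N.post t then 1 else 0) := by
      rw [fire_apply]
      by_cases h1 : p ∈ N.pre t
      · have := he p h1
        by_cases h2 : p ∈ N.post t <;> simp [h1, h2] <;> omega
      · by_cases h2 : p ∈ N.post t <;> simp [h1, h2]
    calc N.fire M t p * 2 ^ ρ p + (if p ∈ N.pre t then 1 else 0) * 2 ^ ρ p
        = (N.fire M t p + (if p ∈ N.pre t then 1 else 0)) * 2 ^ ρ p := by ring
      _ = (M p + (if p ∈ N.post t then 1 else 0)) * 2 ^ ρ p := by rw [hfire]
      _ = M p * 2 ^ ρ p + (if p ∈ N.post t then 1 else 0) * 2 ^ ρ p := by ring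
  rcases hA with hno | ⟨pst, hpst1, hpst2, hpst3⟩
  · -- t does not touch R at all
    have hpre0 : ∀ p ∈ R.toFinset, (if p ∈ N.pre t then 1 else 0) * 2 ^ ρ p = 0 := by
      intro p hp
      rw [if_neg, zero_mul]
      exact fun h => hno p h (Set.mem_toFinset.1 hp)
    have hpost0 : ∀ p ∈ R.toFinset, (if p ∈ N.post t then 1 else 0) * 2 ^ ρ p = 0 := by
      intro p hp
      rw [if_neg, zero_mul]
      intro h
      obtain ⟨q, hq1, hq2⟩ := hR ⟨p, Set.mem_toFinset.1 hp, h⟩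
      exact hno q hq2 hq1
    rw [Finset.sum_eq_zero hpre0, Finset.sum_eq_zero hpost0] at key
    constructor
    · omega
    · rintro ⟨p, hp1, hp2⟩
      exact absurd hp2 (hno p hp1)
  · -- strict decrease
    have ha : 2 ^ ρ pst ≤ ∑ p ∈ R.toFinset, (if p ∈ N.pre t then 1 else 0) * 2 ^ ρ p := by
      have hmem : pst ∈ R.toFinset := Set.mem_toFinset.2 hpst2
      have : (if pst ∈ N.pre t then 1 else 0) * 2 ^ ρ pst = 2 ^ ρ pst := by
        rw [if_pos hpst1, one_mul]
      rw [← this]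
      exact Finset.single_le_sum
        (f := fun p => (if p ∈ N.pre t then 1 else 0) * 2 ^ ρ p)
        (fun p _ => Nat.zero_le _) hmem
    have hb : ∑ p ∈ R.toFinset, (if p ∈ N.post t then 1 else 0) * 2 ^ ρ p
        ≤ 2 ^ ρ pst - 1 := by
      have h1 : ∑ p ∈ R.toFinset, (if p ∈ N.post t then 1 else 0) * 2 ^ ρ p
          = ∑ p ∈ R.toFinset.filter (fun p => p ∈ N.post t), 2 ^ ρ p := by
        rw [Finset.sum_filter]
        apply Finset.sum_congr rfl
        intro p _
        by_cases h : p ∈ N.post t <;> simp [h]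
      rw [h1]
      have h2 : ∑ p ∈ R.toFinset.filter (fun p => p ∈ N.post t), 2 ^ ρ p
          = ∑ v ∈ (R.toFinset.filter (fun p => p ∈ N.post t)).image ρ, 2 ^ v := by
        rw [Finset.sum_image]
        intro x hx y hy hxy
        have hx' : x ∈ R := Set.mem_toFinset.1 (Finset.mem_filter.1 hx).1
        have hy' : y ∈ R := Set.mem_toFinset.1 (Finset.mem_filter.1 hy).1
        exact hinj hx' hy' hxy
      rw [h2]
      have h3 : (R.toFinset.filter (fun p => p ∈ N.post t)).image ρ
          ⊆ Finset.range (ρ pst) := by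
        intro v hv
        obtain ⟨q, hq, rfl⟩ := Finset.mem_image.1 hv
        have hq1 := Finset.mem_filter.1 hq
        exact Finset.mem_range.2 (hpst3 q hq1.2 (Set.mem_toFinset.1 hq1.1))
      calc ∑ v ∈ (R.toFinset.filter (fun p => p ∈ N.post t)).image ρ, 2 ^ v
          ≤ ∑ v ∈ Finset.range (ρ pst), 2 ^ v :=
            Finset.sum_le_sum_of_subset h3
        _ = 2 ^ ρ pst - 1 := sum_two_pow _
    have hlt : muW R ρ (N.fire M t) < muW R ρ M := by
      have hpos : 0 < 2 ^ ρ pst := pow_pos (by norm_num) _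
      omega
    exact ⟨le_of_lt hlt, fun _ => hlt⟩

/-! ### Commoner: necessity (nonempty traps inside siphons of live nets) -/

theorem nonempty_trap_in_siphon [Fintype P] {N : PetriNet P T} (hfc : FreeChoice N)
    {M0 : P → ℕ} (hlive : Live N M0) {R : Set P} (hR : Siphon N R) (hne : R.Nonempty) :
    ∃ S, S ⊆ R ∧ Trap N S ∧ S.Nonempty := by
  by_contra hcon
  push_neg at hcon
  have hNT : ∀ S : Set P, S ⊆ R → Trap N S → ¬S.Nonempty := by
    intro S h1 h2 h3
    rw [hcon S h1 h2] at h3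
    exact Set.not_nonempty_empty h3
  obtain ⟨ρ, hinj, hex⟩ := peel hNT
  -- the allowed transitions
  have hmono : ∀ {σ : List T} {M M' : P → ℕ}, Fires N M σ M' →
      (∀ s ∈ σ, (∀ p ∈ N.pre s, p ∉ R) ∨
        ∃ p, p ∈ N.pre s ∧ p ∈ R ∧ ∀ q ∈ N.post s, q ∈ R → ρ q < ρ p) →
      muW R ρ M' ≤ muW R ρ M := by
    intro σ M M' hf
    induction hf with
    | nil M => intro _; exact le_rfl
    | @cons M M'' w σ' he _ ih =>
      intro hall
      have h1 := (muW_fire hR hinj he (hall w (by simp))).1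
      have h2 := ih (fun x hx => hall x (by simp [hx]))
      omega
  set A : T → Prop := fun t => (∀ p ∈ N.pre t, p ∉ R) ∨
      ∃ p, p ∈ N.pre t ∧ p ∈ R ∧ ∀ q ∈ N.post t, q ∈ R → ρ q < ρ p with hAdef
  have htwin : ∀ t p, p ∈ N.pre t → p ∈ R →
      ∃ t', A t' ∧ N.pre t' = N.pre t ∧ ∃ p', p' ∈ N.pre t' ∧ p' ∈ R := by
    intro t p hp hpR
    obtain ⟨t2, hpre2, hcond⟩ := hex p hpR
    exact ⟨t2, Or.inr ⟨p, hpre2, hpR, hcond⟩, freeChoice_pre_eq hfc hpre2 hp, p, hpre2, hpR⟩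
  -- minimal-µ allowed-reachable marking
  have hsne : (muW R ρ '' {M | AReach N A M0 M}).Nonempty :=
    ⟨muW R ρ M0, M0, AReach.refl N A M0, rfl⟩
  obtain ⟨Mstar, hMstarW, hMstarval⟩ := Nat.sInf_mem hsne
  have hmin : ∀ M', AReach N A M0 M' → muW R ρ Mstar ≤ muW R ρ M' := by
    intro M' h'
    rw [hMstarval]
    exact Nat.sInf_le ⟨M', h', rfl⟩
  have hdeadR : ∀ t, A t → (∃ p ∈ N.pre t, p ∈ R) → ADead N A t Mstar := by
    intro t hAt hex' M3 h3 hen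
    have h3W : AReach N A M0 M3 := hMstarW.trans h3
    have hμ3 : muW R ρ M3 ≤ muW R ρ Mstar := by
      obtain ⟨σ, hf, ha⟩ := h3
      exact hmono hf ha
    have h4W : AReach N A M0 (N.fire M3 t) := h3W.trans (AReach.single hen hAt)
    have hlt : muW R ρ (N.fire M3 t) < muW R ρ M3 := (muW_fire hR hinj hen hAt).2 hex'
    have h5 := hmin _ h4W
    omega
  obtain ⟨M2, h2, hkey⟩ := exists_good_marking hfc A Mstar
  have hZ0 : ∀ p ∈ Zset N A M2, M2 p = 0 := fun p hp => hp M2 (AReach.refl N A M2)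
  have hRtoZ : ∀ u p, p ∈ N.pre u → p ∈ R → ∃ z, z ∈ N.pre u ∧ z ∈ Zset N A M2 := by
    intro u p hp hpR
    obtain ⟨t', hAt', hpre', p', hp'1, hp'2⟩ := htwin u p hp hpR
    have hdead' : ADead N A t' M2 := (hdeadR t' hAt' ⟨p', hp'1, hp'2⟩).mono h2
    obtain ⟨z, hz1, hz2⟩ := hkey t' hdead'
    rw [hpre'] at hz1
    exact ⟨z, hz1, hz2⟩
  have hZsiphon : Siphon N (Zset N A M2) := by
    rintro u ⟨z, hzZ, hzpost⟩
    by_cases hcase : ∃ p ∈ N.pre u, p ∈ R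
    · obtain ⟨p, hp1, hp2⟩ := hcase
      obtain ⟨z', h1', h2'⟩ := hRtoZ u p hp1 hp2
      exact ⟨z', h2', h1'⟩
    · push_neg at hcase
      have hAu : A u := Or.inl hcase
      by_cases hd : ADead N A u M2
      · obtain ⟨z', h1', h2'⟩ := hkey u hd
        exact ⟨z', h2', h1'⟩
      · exfalso
        obtain ⟨M3, h3, hen⟩ := not_aDead hd
        have h4 : AReach N A M2 (N.fire M3 u) := h3.trans (AReach.single hen hAu)
        have hz := hzZ _ h4
        rw [fire_apply, if_pos hzpost] at hz
        omega
  obtain ⟨p0, hp0R⟩ := hne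
  obtain ⟨t0, hp0pre, _⟩ := hex p0 hp0R
  obtain ⟨z0, hz0pre, hz0Z⟩ := hRtoZ t0 p0 hp0pre hp0R
  have hreach : Reach N M0 M2 := (hMstarW.trans h2).reach
  obtain ⟨M5, h5, hen5⟩ := hlive M2 hreach t0
  obtain ⟨σ5, hf5⟩ := h5
  have hz05 : M5 z0 = 0 := siphon_unmarked_invariant hZsiphon hf5 hZ0 z0 hz0Z
  have := hen5 z0 hz0pre
  omega

/-! ### Projection to a union of P-components -/

section Projection

variable [Fintype P] [Fintype T] {N : PetriNet P T} {Q : Set (Set (P ⊕ T))}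

theorem closure_U (hQ : ∀ X ∈ Q, PComponent N X) {p : P} {t : T}
    (hp : Sum.inl p ∈ ⋃₀ Q) (h : p ∈ N.pre t ∨ p ∈ N.post t) : Sum.inr t ∈ ⋃₀ Q := by
  obtain ⟨X, hXQ, hpX⟩ := hp
  exact ⟨X, hXQ, (hQ X hXQ).2.1 p hpX t h⟩

theorem freeChoice_restrict (hfc : FreeChoice N) (U : Set (P ⊕ T)) :
    FreeChoice (N.restrict U) := by
  intro t1 t2
  rcases hfc t1.1 t2.1 with h | h
  · left
    ext q
    show q.1 ∈ N.pre t1.1 ↔ q.1 ∈ N.pre t2.1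
    rw [h]
  · right
    ext q
    simp only [Set.mem_inter_iff, Set.mem_empty_iff_false, iff_false]
    rintro ⟨h1, h2⟩
    have hmem : q.1 ∈ N.pre t1.1 ∩ N.pre t2.1 := ⟨h1, h2⟩
    rw [h] at hmem
    exact hmem

theorem siphon_lift (hQ : ∀ X ∈ Q, PComponent N X)
    {R : Set {p // Sum.inl p ∈ ⋃₀ Q}}
    (h : Siphon (N.restrict (⋃₀ Q)) R) : Siphon N (Subtype.val '' R) := by
  rintro t ⟨p, ⟨q, hqR, rfl⟩, hppost⟩
  have htU : Sum.inr t ∈ ⋃₀ Q := closure_U hQ q.2 (Or.inr hppost)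
  have hmem : (⟨t, htU⟩ : {t // Sum.inr t ∈ ⋃₀ Q}) ∈ preT (N.restrict (⋃₀ Q)) R :=
    ⟨q, hqR, hppost⟩
  obtain ⟨q2, hq2R, hq2pre⟩ := h hmem
  exact ⟨q2.1, ⟨q2, hq2R, rfl⟩, hq2pre⟩

theorem trap_restrict {U : Set (P ⊕ T)} {S : Set P}
    (hSU : ∀ p ∈ S, Sum.inl p ∈ U) (h : Trap N S) :
    Trap (N.restrict U) {q | q.1 ∈ S} := by
  rintro t ⟨q, hqS, hqpre⟩
  have hmem : t.1 ∈ postT N S := ⟨q.1, hqS, hqpre⟩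
  obtain ⟨p, hpS, hppost⟩ := h hmem
  exact ⟨⟨p, hSU p hpS⟩, hpS, hppost⟩

/-- The number of components of `Q` containing a given node. -/
noncomputable def compWeight (Q : Set (Set (P ⊕ T))) [Fintype P] [Fintype T]
    (x : P ⊕ T) : ℕ :=
  (Q.toFinset.filter (fun X => x ∈ X)).card

theorem weight_sum (t : T) (f : T → Set P)
    (hclos : ∀ X ∈ Q, ∀ p, Sum.inl p ∈ X → p ∈ f t → Sum.inr t ∈ X)
    (huniq : ∀ X ∈ Q, Sum.inr t ∈ X → ∃! p, p ∈ f t ∧ Sum.inl p ∈ X) :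
    ∑ q : {p // Sum.inl p ∈ ⋃₀ Q},
        (if q.1 ∈ f t then 1 else 0) * compWeight Q (Sum.inl q.1)
      = (Q.toFinset.filter (fun X => Sum.inr t ∈ X)).card := by
  have step1 : ∀ q : {p // Sum.inl p ∈ ⋃₀ Q},
      (if q.1 ∈ f t then 1 else 0) * compWeight Q (Sum.inl q.1)
      = ∑ X ∈ Q.toFinset, if q.1 ∈ f t ∧ Sum.inl q.1 ∈ X then 1 else 0 := by
    intro q
    by_cases hq : q.1 ∈ f t
    · simp only [if_pos hq, one_mul, compWeight, Finset.card_filter]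
      apply Finset.sum_congr rfl
      intro X _
      simp [hq]
    · simp [hq]
  rw [Finset.sum_congr rfl (fun q _ => step1 q), Finset.sum_comm, Finset.card_filter]
  apply Finset.sum_congr rfl
  intro X hX
  have hXQ : X ∈ Q := Set.mem_toFinset.1 hX
  by_cases ht : Sum.inr t ∈ X
  · rw [if_pos ht]
    obtain ⟨p, ⟨hp1, hp2⟩, hpu⟩ := huniq X hXQ ht
    have hpU : Sum.inl p ∈ ⋃₀ Q := ⟨X, hXQ, hp2⟩
    rw [Finset.sum_eq_single (⟨p, hpU⟩ : {p // Sum.inl p ∈ ⋃₀ Q})]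
    · simp [hp1, hp2]
    · intro q _ hqne
      rw [if_neg]
      rintro ⟨h1, h2⟩
      exact hqne (Subtype.ext (hpu q.1 ⟨h1, h2⟩))
    · intro hcon
      exact absurd (Finset.mem_univ _) hcon
  · rw [if_neg ht]
    apply Finset.sum_eq_zero
    intro q _
    rw [if_neg]
    rintro ⟨h1, h2⟩
    exact ht (hclos X hXQ q.1 h2 h1)

theorem tok_fire (hQ : ∀ X ∈ Q, PComponent N X) (t : {t // Sum.inr t ∈ ⋃₀ Q})
    (M : {p // Sum.inl p ∈ ⋃₀ Q} → ℕ) (he : (N.restrict (⋃₀ Q)).enabled M t) :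
    ∑ q : {p // Sum.inl p ∈ ⋃₀ Q},
        (N.restrict (⋃₀ Q)).fire M t q * compWeight Q (Sum.inl q.1)
      = ∑ q : {p // Sum.inl p ∈ ⋃₀ Q}, M q * compWeight Q (Sum.inl q.1) := by
  have hpre : ∑ q : {p // Sum.inl p ∈ ⋃₀ Q},
      (if q.1 ∈ N.pre t.1 then 1 else 0) * compWeight Q (Sum.inl q.1)
      = (Q.toFinset.filter (fun X => Sum.inr t.1 ∈ X)).card :=
    weight_sum t.1 N.pre
      (fun X hX p hp hpre => (hQ X hX).2.1 p hp t.1 (Or.inl hpre))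
      (fun X hX ht => ((hQ X hX).2.2.1 t.1 ht).1)
  have hpost : ∑ q : {p // Sum.inl p ∈ ⋃₀ Q},
      (if q.1 ∈ N.post t.1 then 1 else 0) * compWeight Q (Sum.inl q.1)
      = (Q.toFinset.filter (fun X => Sum.inr t.1 ∈ X)).card :=
    weight_sum t.1 N.post
      (fun X hX p hp hpost => (hQ X hX).2.1 p hp t.1 (Or.inr hpost))
      (fun X hX ht => ((hQ X hX).2.2.1 t.1 ht).2)
  have key : ∑ q : {p // Sum.inl p ∈ ⋃₀ Q},
        (N.restrict (⋃₀ Q)).fire M t q * compWeight Q (Sum.inl q.1)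
      + ∑ q : {p // Sum.inl p ∈ ⋃₀ Q},
        (if q.1 ∈ N.pre t.1 then 1 else 0) * compWeight Q (Sum.inl q.1)
      = ∑ q : {p // Sum.inl p ∈ ⋃₀ Q}, M q * compWeight Q (Sum.inl q.1)
      + ∑ q : {p // Sum.inl p ∈ ⋃₀ Q},
        (if q.1 ∈ N.post t.1 then 1 else 0) * compWeight Q (Sum.inl q.1) := by
    rw [← Finset.sum_add_distrib, ← Finset.sum_add_distrib]
    apply Finset.sum_congr rfl
    intro q _
    have hfq : (N.restrict (⋃₀ Q)).fire M t q
        = M q - (if q.1 ∈ N.pre t.1 then 1 else 0) + (if q.1 ∈ N.post t.1 then 1 else 0) :=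
      rfl
    have hsum : (N.restrict (⋃₀ Q)).fire M t q + (if q.1 ∈ N.pre t.1 then 1 else 0)
        = M q + (if q.1 ∈ N.post t.1 then 1 else 0) := by
      rw [hfq]
      by_cases h1 : q.1 ∈ N.pre t.1
      · have : 1 ≤ M q := he q h1
        by_cases h2 : q.1 ∈ N.post t.1 <;> simp [h1, h2] <;> omega
      · by_cases h2 : q.1 ∈ N.post t.1 <;> simp [h1, h2]
    calc (N.restrict (⋃₀ Q)).fire M t q * compWeight Q (Sum.inl q.1)
          + (if q.1 ∈ N.pre t.1 then 1 else 0) * compWeight Q (Sum.inl q.1)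
        = ((N.restrict (⋃₀ Q)).fire M t q + (if q.1 ∈ N.pre t.1 then 1 else 0))
          * compWeight Q (Sum.inl q.1) := by ring
      _ = (M q + (if q.1 ∈ N.post t.1 then 1 else 0)) * compWeight Q (Sum.inl q.1) := by
          rw [hsum]
      _ = M q * compWeight Q (Sum.inl q.1)
          + (if q.1 ∈ N.post t.1 then 1 else 0) * compWeight Q (Sum.inl q.1) := by ring
  rw [hpre, hpost] at key
  omega

theorem bounded_restrict (hQ : ∀ X ∈ Q, PComponent N X)
    (Minit : {p // Sum.inl p ∈ ⋃₀ Q} → ℕ) :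
    Bounded (N.restrict (⋃₀ Q)) Minit := by
  have hinv : ∀ {σ} {M M' : {p // Sum.inl p ∈ ⋃₀ Q} → ℕ},
      Fires (N.restrict (⋃₀ Q)) M σ M' →
      ∑ q : {p // Sum.inl p ∈ ⋃₀ Q}, M' q * compWeight Q (Sum.inl q.1)
        = ∑ q : {p // Sum.inl p ∈ ⋃₀ Q}, M q * compWeight Q (Sum.inl q.1) := by
    intro σ M M' hf
    induction hf with
    | nil M => rfl
    | @cons M M'' t σ' he _ ih => rw [ih, tok_fire hQ t M he]
  refine ⟨∑ q : {p // Sum.inl p ∈ ⋃₀ Q}, Minit q * compWeight Q (Sum.inl q.1), ?_⟩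
  rintro M' ⟨σ, hf⟩ p
  have hw : 1 ≤ compWeight Q (Sum.inl p.1) := by
    obtain ⟨X, hXQ, hpX⟩ := p.2
    exact Finset.card_pos.2 ⟨X, Finset.mem_filter.2 ⟨Set.mem_toFinset.2 hXQ, hpX⟩⟩
  calc M' p ≤ M' p * compWeight Q (Sum.inl p.1) := Nat.le_mul_of_pos_right _ hw
    _ ≤ ∑ q : {p // Sum.inl p ∈ ⋃₀ Q}, M' q * compWeight Q (Sum.inl q.1) :=
        Finset.single_le_sum (f := fun q => M' q * compWeight Q (Sum.inl q.1))
          (fun q _ => Nat.zero_le _) (Finset.mem_univ p)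
    _ = ∑ q : {p // Sum.inl p ∈ ⋃₀ Q}, Minit q * compWeight Q (Sum.inl q.1) := hinv hf

theorem live_restrict (hQ : ∀ X ∈ Q, PComponent N X) (hfc : FreeChoice N)
    {M0 : P → ℕ} (hlive : Live N M0) :
    Live (N.restrict (⋃₀ Q)) (fun _ => 1) := by
  apply live_of_siphon_trap (freeChoice_restrict hfc _)
  intro R hsiphon hne
  have h1 : Siphon N (Subtype.val '' R) := siphon_lift hQ hsiphon
  obtain ⟨S, hSsub, hStrap, hSne⟩ :=
    nonempty_trap_in_siphon hfc hlive h1 (hne.image _)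
  have hSU : ∀ p ∈ S, Sum.inl p ∈ ⋃₀ Q := by
    intro p hp
    obtain ⟨q, _, rfl⟩ := hSsub hp
    exact q.2
  refine ⟨{q | q.1 ∈ S}, ?_, trap_restrict hSU hStrap, ?_⟩
  · intro q hq
    obtain ⟨q2, hq2R, hq2⟩ := hSsub hq
    have hq2q : q2 = q := Subtype.ext hq2
    rwa [← hq2q]
  · obtain ⟨p, hp⟩ := hSne
    exact ⟨⟨p, hSU p hp⟩, hp, le_refl 1⟩

end Projection

end PetriNet

open PetriNet

/-- The Q-projection of a well-formed free-choice net is a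
well-formed free-choice net. -/
theorem projection_wellFormed_freeChoice {P T : Type} [Fintype P] [Fintype T]
    (N : PetriNet P T) (hwf : WellFormed N) (hfc : FreeChoice N)
    (Q : Set (Set (P ⊕ T))) (hne : Q.Nonempty) (hQ : ∀ X ∈ Q, PComponent N X) :
    WellFormed (N.restrict (⋃₀ Q)) ∧ FreeChoice (N.restrict (⋃₀ Q)) := by
  obtain ⟨M0, hlive, _⟩ := hwf
  exact ⟨⟨fun _ => 1, live_restrict hQ hfc hlive, bounded_restrict hQ (fun _ => 1)⟩,
    freeChoice_restrict hfc _⟩
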